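/- Compressing repetitions commutes with deletion up to further compression: for any string s and character p, S(D(S(s),p)) = S(D(s,p)). In particular, applying S before or after deleting a character yields the same result after a final compression. -/
import Mathlib


/-- `S` compresses each maximal run of equal consecutive characters
into a single occurrence of that character. -/
def S {A : Type*} [DecidableEq A] : List A → List A
  | [] => []
  | [a] => [a]
  | a :: b :: t => if a = b then S (b :: t) else a :: S (b :: t)

/-- `D s p` deletes all occurrences of the character `p` from the list `s`. -/
def D {A : Type*} [DecidableEq A] (s : List A) (p : A) : List A :=
  s.filter (fun c => c ≠ p)

lemma S_cons_head {A : Type*} [DecidableEq A] (a : A) (t : List A) :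
    ∃ r, S (a :: t) = a :: r := by
  induction t generalizing a with
  | nil => exact ⟨[], rfl⟩
  | cons b t ih =>
    by_cases h : a = b
    · obtain ⟨r, hr⟩ := ih b
      subst h
      exact ⟨r, by rw [S, if_pos rfl, hr]⟩
    · exact ⟨S (b :: t), by simp [S, h]⟩

lemma S_cons_congr {A : Type*} [DecidableEq A] (a : A) {m m' : List A}
    (h : S m = S m') : S (a :: m) = S (a :: m') := by
  match m, m' with
  | [], [] => rfl
  | [], b :: t =>
    obtain ⟨r, hr⟩ := S_cons_head b t
    simp [S, hr] at h
  | b :: t, [] =>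
    obtain ⟨r, hr⟩ := S_cons_head b t
    simp [S, hr] at h
  | b :: t, c :: t' =>
    obtain ⟨r, hr⟩ := S_cons_head b t
    obtain ⟨r', hr'⟩ := S_cons_head c t'
    rw [hr, hr'] at h
    obtain ⟨rfl, rfl⟩ : b = c ∧ r = r' := by simpa using h
    show (if a = b then S (b :: t) else a :: S (b :: t)) =
        (if a = b then S (b :: t') else a :: S (b :: t'))
    rw [hr, hr']

lemma D_cons {A : Type*} [DecidableEq A] (a : A) (t : List A) (p : A) :
    D (a :: t) p = if a = p then D t p else a :: D t p := by
  by_cases h : a = p <;> simp [D, List.filter_cons, h]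

theorem S_D_S_comm {A : Type*} [DecidableEq A] (s : List A) (p : A) :
    S (D (S s) p) = S (D s p) := by
  induction s using S.induct with
  | case1 => rfl
  | case2 a => rfl
  | case3 b t ih =>
    rw [show S (b :: b :: t) = S (b :: t) from by rw [S, if_pos rfl]]
    rw [ih, D_cons b]
    by_cases hb : b = p
    · simp [D_cons, hb]
    · rw [if_neg hb, D_cons b, if_neg hb, D_cons b, if_neg hb,
        show S (b :: b :: D t p) = S (b :: D t p) from by rw [S, if_pos rfl]]
  | case4 a b t hab ih =>
    rw [show S (a :: b :: t) = a :: S (b :: t) from by rw [S, if_neg hab]]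
    rw [D_cons a, D_cons a]
    by_cases ha : a = p
    · simp only [if_pos ha]; exact ih
    · simp only [if_neg ha]
      exact S_cons_congr a ih
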